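/- arXiv:1909.08988 — 2 statements merged into one kernel-verified Lean document; each statement's English description precedes it below -/
import Mathlib

section
/- Let E be a compact subset of ℝ^d equipped with Lebesgue measure, let π : E → ℝ be a continuous positive probability density, let Θ : E×E → (0,∞) be a continuous kernel, let h be an acceptance function, and set α(x,y) = Θ(x|y)π(y)/(Θ(y|x)π(x)). Then for every continuous positive probability density g on E and every continuous φ : E → ℝ, one has the rewriting identity ∬_{E×E} g(x)·Θ(y|x)·h(α(x,y))·(φ(y) − φ(x)) dx dy = ∬_{E×E} π(x)·Θ(y|x)·h(α(x,y))·φ(x)·(g(y)/π(y) − g(x)/π(x)) dx dy. -/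
/-
Write `K(x,y) = Θ(y|x) h(α(x,y))` for the Metropolis–Hastings transition density. The symmetry
`u h(1/u) = h(u)` of the acceptance function is exactly what makes `π(x) K(x,y)` symmetric in
`(x,y)` (detailed balance). Expanding `g(y)/π(y)` on the right and using detailed balance, the
difference of the two sides becomes `∬ (k(x,y) - k(y,x))` with `k(x,y) = g(x) K(x,y) φ(y)`,
which vanishes by Fubini. On the compact set `E` all integrands are continuous, hence integrable.
-/

open MeasureTheory Set

theorem mul_apply_div_eq_mul_apply_div {h : ℝ → ℝ}
    (hsym : ∀ u : ℝ, 0 < u → u * h (1 / u) = h u) {a b : ℝ} (ha : 0 < a) (hb : 0 < b) :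
    a * h (b / a) = b * h (a / b) := by
  rw [← hsym (b / a) (div_pos hb ha), one_div_div]
  field_simp

theorem ContinuousOn.integrable_restrict_prod_restrict {α β : Type*} [TopologicalSpace α]
    [T2Space α] [MeasurableSpace α] [TopologicalSpace β] [T2Space β] [MeasurableSpace β]
    [OpensMeasurableSpace (α × β)] {μ : Measure α} {ν : Measure β} [IsFiniteMeasureOnCompacts μ]
    [IsFiniteMeasureOnCompacts ν] [SFinite μ] [SFinite ν] {s : Set α} {t : Set β}
    {f : α × β → ℝ} (hf : ContinuousOn f (s ×ˢ t)) (hs : IsCompact s) (ht : IsCompact t) :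
    Integrable f ((μ.restrict s).prod (ν.restrict t)) := by
  rw [Measure.prod_restrict]
  exact hf.integrableOn_compact (hs.prod ht)

theorem integral_integral_mul_sub_eq_of_detailed_balance {α : Type*} [MeasurableSpace α]
    {μ : Measure α} [SFinite μ] {π g φ : α → ℝ} {F : α → α → ℝ}
    (hπ : ∀ᵐ x ∂μ, π x ≠ 0)
    (hdb : ∀ᵐ p ∂μ.prod μ, π p.1 * F p.1 p.2 = π p.2 * F p.2 p.1)
    (hL : Integrable (fun p : α × α => g p.1 * F p.1 p.2 * (φ p.2 - φ p.1)) (μ.prod μ))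
    (hR : Integrable (fun p : α × α =>
      π p.1 * F p.1 p.2 * φ p.1 * (g p.2 / π p.2 - g p.1 / π p.1)) (μ.prod μ))
    (hflow : Integrable (fun p : α × α => g p.1 * F p.1 p.2 * φ p.2) (μ.prod μ)) :
    ∫ x, ∫ y, g x * F x y * (φ y - φ x) ∂μ ∂μ
      = ∫ x, ∫ y, π x * F x y * φ x * (g y / π y - g x / π x) ∂μ ∂μ := by
  rw [← integral_prod _ hL, ← integral_prod _ hR, ← sub_eq_zero, ← integral_sub hL hR]
  have hπ₁ := (Measure.quasiMeasurePreserving_fst (μ := μ) (ν := μ)).ae hπ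
  have hπ₂ := (Measure.quasiMeasurePreserving_snd (μ := μ) (ν := μ)).ae hπ
  have hflow_swap : Integrable (fun p : α × α => g p.2 * F p.2 p.1 * φ p.1) (μ.prod μ) :=
    hflow.swap
  calc _ = ∫ p, (g p.1 * F p.1 p.2 * φ p.2 - g p.2 * F p.2 p.1 * φ p.1) ∂μ.prod μ := by
        refine integral_congr_ae ?_
        filter_upwards [hπ₁, hπ₂, hdb] with p h₁ h₂ hp
        field_simp
        linear_combination -(φ p.1 * g p.2) * hp
    _ = 0 := by
        rw [integral_sub hflow hflow_swap, sub_eq_zero]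
        exact (integral_prod_swap (fun p : α × α => g p.1 * F p.1 p.2 * φ p.2)).symm

theorem continuousOn_kernel_mul_acceptance {X : Type*} [TopologicalSpace X] {E : Set X}
    {π : X → ℝ} {Θ : X → X → ℝ} {h : ℝ → ℝ} (hπ : ContinuousOn π E) (hπpos : ∀ x ∈ E, 0 < π x)
    (hΘc : ContinuousOn (fun p : X × X => Θ p.1 p.2) (E ×ˢ E))
    (hΘpos : ∀ x ∈ E, ∀ y ∈ E, 0 < Θ x y) (hcont : ContinuousOn h (Ici 0)) :
    ContinuousOn (fun p : X × X => Θ p.1 p.2 * h (Θ p.2 p.1 * π p.2 / (Θ p.1 p.2 * π p.1)))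
      (E ×ˢ E) := by
  have hΘswap : ContinuousOn (fun p : X × X => Θ p.2 p.1) (E ×ˢ E) :=
    hΘc.comp continuous_swap.continuousOn fun p hp => ⟨hp.2, hp.1⟩
  have hweight_pos : ∀ p ∈ E ×ˢ E, 0 < Θ p.1 p.2 * π p.1 :=
    fun p hp => mul_pos (hΘpos _ hp.1 _ hp.2) (hπpos _ hp.1)
  have hratio :
      ContinuousOn (fun p : X × X => Θ p.2 p.1 * π p.2 / (Θ p.1 p.2 * π p.1)) (E ×ˢ E) :=
    (hΘswap.mul (hπ.comp continuous_snd.continuousOn fun p hp => hp.2)).div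
      (hΘc.mul (hπ.comp continuous_fst.continuousOn fun p hp => hp.1))
      fun p hp => (hweight_pos p hp).ne'
  refine hΘc.mul (hcont.comp hratio fun p hp => ?_)
  exact (div_pos (hweight_pos p.swap ⟨hp.2, hp.1⟩) (hweight_pos p hp)).le

theorem stmt_3_general {d : ℕ} (E : Set (EuclideanSpace ℝ (Fin d))) (hE : IsCompact E)
    (π : EuclideanSpace ℝ (Fin d) → ℝ)
    (hπc : ContinuousOn π E) (hπpos : ∀ x ∈ E, 0 < π x)
    (Θ : EuclideanSpace ℝ (Fin d) → EuclideanSpace ℝ (Fin d) → ℝ)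
    (hΘc : ContinuousOn (fun p : EuclideanSpace ℝ (Fin d) × EuclideanSpace ℝ (Fin d) =>
      Θ p.1 p.2) (E ×ˢ E))
    (hΘpos : ∀ x ∈ E, ∀ y ∈ E, 0 < Θ x y)
    (h : ℝ → ℝ)
    (hcont : ContinuousOn h (Set.Ici 0))
    (hsym : ∀ u : ℝ, 0 < u → u * h (1 / u) = h u)
    (g : EuclideanSpace ℝ (Fin d) → ℝ)
    (hgc : ContinuousOn g E)
    (φ : EuclideanSpace ℝ (Fin d) → ℝ) (hφ : ContinuousOn φ E) :
    ∫ x in E, ∫ y in E,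
        g x * Θ x y * h (Θ y x * π y / (Θ x y * π x)) * (φ y - φ x)
      = ∫ x in E, ∫ y in E,
        π x * Θ x y * h (Θ y x * π y / (Θ x y * π x)) * φ x *
          (g y / π y - g x / π x) := by
  have hEm := hE.measurableSet
  let K : EuclideanSpace ℝ (Fin d) → EuclideanSpace ℝ (Fin d) → ℝ :=
    fun x y => Θ x y * h (Θ y x * π y / (Θ x y * π x))
  have hK : ContinuousOn (fun p : _ × _ => K p.1 p.2) (E ×ˢ E) :=
    continuousOn_kernel_mul_acceptance hπc hπpos hΘc hΘpos hcont
  have hdb : ∀ᵐ p ∂(volume.restrict E).prod (volume.restrict E),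
      π p.1 * K p.1 p.2 = π p.2 * K p.2 p.1 := by
    rw [Measure.prod_restrict]
    refine ae_restrict_of_forall_mem (hEm.prod hEm) fun p ⟨hx, hy⟩ => ?_
    linear_combination mul_apply_div_eq_mul_apply_div hsym
      (mul_pos (hΘpos _ hx _ hy) (hπpos _ hx)) (mul_pos (hΘpos _ hy _ hx) (hπpos _ hy))
  have hπne : ∀ x ∈ E, π x ≠ 0 := fun x hx => (hπpos x hx).ne'
  have hint : ∀ {f : _ × _ → ℝ}, ContinuousOn f (E ×ˢ E) →
      Integrable f ((volume.restrict E).prod (volume.restrict E)) :=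
    fun hf => hf.integrable_restrict_prod_restrict hE hE
  have key := integral_integral_mul_sub_eq_of_detailed_balance (g := g) (φ := φ)
    (ae_restrict_of_forall_mem hEm hπne) hdb
    (hint (by fun_prop (disch := intro p hp; simp_all)))
    (hint (by fun_prop (disch := intro p hp; simp_all)))
    (hint (by fun_prop (disch := intro p hp; simp_all)))
  simpa only [K, mul_assoc] using key

/-- On compact `E ⊆ ℝ^d` with Lebesgue measure, for a continuous
positive probability density `π`, a continuous positive kernel `Θ` (`Θ x y` denotes
`Θ(y|x)`), an acceptance function `h`, and `α(x,y) = Θ(x|y)π(y)/(Θ(y|x)π(x))`: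
for every continuous positive probability density `g` and every continuous `φ`,
`∬ g(x)Θ(y|x)h(α(x,y))(φ(y)−φ(x)) dx dy
  = ∬ π(x)Θ(y|x)h(α(x,y))φ(x)(g(y)/π(y) − g(x)/π(x)) dx dy`. -/
theorem stmt_3 {d : ℕ} (E : Set (EuclideanSpace ℝ (Fin d))) (hE : IsCompact E)
    (π : EuclideanSpace ℝ (Fin d) → ℝ)
    (hπc : ContinuousOn π E) (hπpos : ∀ x ∈ E, 0 < π x)
    (hπint : ∫ x in E, π x = 1)
    (Θ : EuclideanSpace ℝ (Fin d) → EuclideanSpace ℝ (Fin d) → ℝ)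
    (hΘc : ContinuousOn (fun p : EuclideanSpace ℝ (Fin d) × EuclideanSpace ℝ (Fin d) =>
      Θ p.1 p.2) (E ×ˢ E))
    (hΘpos : ∀ x ∈ E, ∀ y ∈ E, 0 < Θ x y)
    (h : ℝ → ℝ)
    (hcont : ContinuousOn h (Set.Ici 0))
    (hmono : MonotoneOn h (Set.Ici 0))
    (hrange : ∀ u ∈ Set.Ici (0 : ℝ), h u ∈ Set.Icc (0 : ℝ) 1)
    (hsym : ∀ u : ℝ, 0 < u → u * h (1 / u) = h u)
    (g : EuclideanSpace ℝ (Fin d) → ℝ)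
    (hgc : ContinuousOn g E) (hgpos : ∀ x ∈ E, 0 < g x)
    (hgint : ∫ x in E, g x = 1)
    (φ : EuclideanSpace ℝ (Fin d) → ℝ) (hφ : ContinuousOn φ E) :
    ∫ x in E, ∫ y in E,
        g x * Θ x y * h (Θ y x * π y / (Θ x y * π x)) * (φ y - φ x)
      = ∫ x in E, ∫ y in E,
        π x * Θ x y * h (Θ y x * π y / (Θ x y * π x)) * φ x *
          (g y / π y - g x / π x) :=
  stmt_3_general E hE π hπc hπpos Θ hΘc hΘpos h hcont hsym g hgc φ hφ
end

section
/- Assume the proposal distribution Θ satisfies the monotonicity assumption: there is a non-decreasing function c⁻ : (0,∞) → (0,1] such that for every continuous positive probability density f on E, inf_{x,y∈E} Θ_f(y|x)/π(y) ≥ c⁻(inf_{x∈E} f(x)/π(x)). Let f be a solution of the nonlinear Metropolis evolution equation with initial condition f₀ a continuous positive probability density, let m := inf_{x∈E} f₀(x)/π(x) > 0, and let H(t) := (1/2)·∫_E π(x)·|f_t(x)/π(x) − 1|² dx. Then for all t ≥ 0, H(t) ≤ H(0)·exp(−2·c⁻(m)·h(1)·t). -/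
/-!
Write `g_t = f_t / π` and `K_t(x, y) = π(x) Θ_{f_t}(y|x) h(α_{f_t}(x, y))`, so that
`∂_t f_t(x) = ∫ K_t(x, y) (g_t(y) - g_t(x)) dy`. At a point where `g_t` is minimal over `E` this
right-hand side is nonnegative, which gives the minimum principle `inf g_t ≥ m`. The identity
`u h(1/u) = h(u)` makes `K_t` symmetric (detailed balance); together with `h(α) ≥ h(1)` for
`α ≥ 1` and the monotonicity assumption `Θ_{f_t}(y|x) ≥ c⁻(m) π(y)` this yields
`K_t(x, y) ≥ c⁻(m) h(1) π(x) π(y)`. Symmetrising, `2 H'(t) = -∬ K_t (g_t(y) - g_t(x))²`, which the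
kernel bound turns into `H' ≤ -2 c⁻(m) h(1) H`, since `∬ π π (g(y) - g(x))² = 4 H` when
`∫ π g = 1`. Grönwall's inequality concludes.
-/

open MeasureTheory Set Filter Topology

def IsPosDensityOn {d : ℕ} (E : Set (EuclideanSpace ℝ (Fin d)))
    (g : EuclideanSpace ℝ (Fin d) → ℝ) : Prop :=
  ContinuousOn g E ∧ (∀ x ∈ E, 0 < g x) ∧ (∫ x in E, g x) = 1

theorem ContinuousOn.comp_fst_prod {α β γ : Type*} [TopologicalSpace α] [TopologicalSpace β]
    [TopologicalSpace γ] {f : α → γ} {s : Set α} (hf : ContinuousOn f s) (t : Set β) :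
    ContinuousOn (fun z : α × β => f z.1) (s ×ˢ t) :=
  hf.comp continuousOn_fst fun _ hz => hz.1

theorem ContinuousOn.comp_snd_prod {α β γ : Type*} [TopologicalSpace α] [TopologicalSpace β]
    [TopologicalSpace γ] {f : β → γ} {t : Set β} (hf : ContinuousOn f t) (s : Set α) :
    ContinuousOn (fun z : α × β => f z.2) (s ×ˢ t) :=
  hf.comp continuousOn_snd fun _ hz => hz.2

theorem le_mul_exp_of_hasDerivWithinAt_le_neg_mul {u u' : ℝ → ℝ} {k : ℝ}
    (hu : ∀ t ∈ Ici (0 : ℝ), HasDerivWithinAt u (u' t) (Ici 0) t)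
    (hbound : ∀ t ∈ Ici (0 : ℝ), u' t ≤ -k * u t) :
    ∀ t ∈ Ici (0 : ℝ), u t ≤ u 0 * Real.exp (-k * t) := by
  intro t ht
  have := le_gronwallBound_of_liminf_deriv_right_le (f' := u') (δ := u 0) (K := -k) (ε := 0)
    (fun s hs => (hu s hs.1).continuousWithinAt.mono Icc_subset_Ici_self)
    (fun s hs _ hr => ((hu s hs.1).mono (Ici_subset_Ici.2 hs.1)).liminf_right_slope_le hr)
    le_rfl (fun s hs => by simpa using hbound s hs.1) t ⟨ht, le_rfl⟩
  simpa [gronwallBound_ε0] using this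

theorem le_of_isMinOn_imp_deriv_nonneg {X : Type*} [TopologicalSpace X] {E : Set X}
    (hE : IsCompact E) {u D : ℝ → X → ℝ} {m : ℝ}
    (hu : ContinuousOn (fun p : ℝ × X => u p.1 p.2) (Ici 0 ×ˢ E))
    (hD : ∀ t ∈ Ioi (0 : ℝ), ∀ x ∈ E, HasDerivWithinAt (u · x) (D t x) (Ici 0) t)
    (hDmin : ∀ t ∈ Ioi (0 : ℝ), ∀ x ∈ E, IsMinOn (u t) E x → 0 ≤ D t x)
    (h0 : ∀ x ∈ E, m ≤ u 0 x) :
    ∀ t ∈ Ici (0 : ℝ), ∀ x ∈ E, m ≤ u t x := by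
  intro t (ht : 0 ≤ t) x hx
  -- Minimising `u + ε s` instead of `u` makes the time derivative at an interior minimiser
  -- strictly positive, which is incompatible with minimality from the left.
  have hperturbed : ∀ ε > 0, m ≤ u t x + ε * t := by
    intro ε hε
    set v : ℝ × X → ℝ := fun p => u p.1 p.2 + ε * p.1
    have hv : ContinuousOn v (Icc 0 t ×ˢ E) :=
      (hu.mono (prod_mono Icc_subset_Ici_self subset_rfl)).add (by fun_prop)
    obtain ⟨p, ⟨⟨hp0, hpt⟩, hpE⟩, hpmin⟩ :=
      (isCompact_Icc.prod hE).exists_isMinOn ⟨(t, x), ⟨ht, le_rfl⟩, hx⟩ hv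
    refine le_trans ?_ (hpmin ⟨⟨ht, le_rfl⟩, hx⟩)
    rcases hp0.eq_or_lt with hp0 | hp0
    · simpa [v, ← hp0] using h0 p.2 hpE
    have hxmin : IsMinOn (u p.1) E p.2 := fun y hy => by
      simpa [v] using hpmin (show (p.1, y) ∈ Icc 0 t ×ˢ E from ⟨⟨hp0.le, hpt⟩, hy⟩)
    have hderiv : HasDerivWithinAt (fun s => v (s, p.2)) (D p.1 p.2 + ε) (Icc 0 t) p.1 :=
      ((hD p.1 hp0 p.2 hpE).mono Icc_subset_Ici_self).add
        ((hasDerivWithinAt_id _ _).const_mul ε |>.congr_deriv (mul_one ε))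
    have hleft : 0 - p.1 ∈ posTangentConeAt (Icc 0 t) p.1 :=
      sub_mem_posTangentConeAt_of_segment_subset
        (by rw [segment_symm, segment_eq_Icc hp0.le]; exact Icc_subset_Icc_right hpt)
    have hlocmin : IsLocalMinOn (fun s => v (s, p.2)) (Icc 0 t) p.1 :=
      IsMinOn.localize fun s hs => hpmin ⟨hs, hpE⟩
    have := hlocmin.hasFDerivWithinAt_nonneg hderiv hleft
    simp only [zero_sub, ContinuousLinearMap.toSpanSingleton_apply, smul_eq_mul, neg_mul,
      Left.nonneg_neg_iff] at this
    nlinarith [hDmin p.1 hp0 p.2 hpE hxmin]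
  have hlim : Tendsto (fun ε => u t x + ε * t) (𝓝[>] 0) (𝓝 (u t x)) := by
    have : Continuous fun ε : ℝ => u t x + ε * t := by fun_prop
    simpa using (this.continuousWithinAt (s := Ioi 0) (x := 0)).tendsto
  exact ge_of_tendsto hlim (eventually_nhdsWithin_of_forall hperturbed)

theorem le_div_of_jump_equation {X : Type*} [TopologicalSpace X] [T2Space X] [MeasurableSpace X]
    [OpensMeasurableSpace X] (μ : Measure X) {E : Set X} (hE : IsCompact E) {π : X → ℝ}
    {f : ℝ → X → ℝ} {K : ℝ → X → X → ℝ} {m : ℝ} (hπc : ContinuousOn π E)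
    (hπ : ∀ x ∈ E, 0 < π x) (hfc : ContinuousOn (fun p : ℝ × X => f p.1 p.2) (Ici 0 ×ˢ E))
    (hK : ∀ t ∈ Ioi (0 : ℝ), ∀ x ∈ E, ∀ y ∈ E, 0 ≤ K t x y)
    (hderiv : ∀ t ∈ Ioi (0 : ℝ), ∀ x ∈ E, HasDerivWithinAt (f · x)
      (∫ y in E, K t x y * (f t y / π y - f t x / π x) ∂μ) (Ici 0) t)
    (h0 : ∀ x ∈ E, m ≤ f 0 x / π x) :
    ∀ t ∈ Ici (0 : ℝ), ∀ x ∈ E, m ≤ f t x / π x :=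
  le_of_isMinOn_imp_deriv_nonneg hE
    (hfc.div (hπc.comp_snd_prod _) fun p hp => (hπ p.2 hp.2).ne')
    (fun t ht x hx => (hderiv t ht x hx).div_const (π x))
    (fun t ht x hx hmin => div_nonneg (setIntegral_nonneg hE.measurableSet fun y hy =>
      mul_nonneg (hK t ht x hx y hy) (sub_nonneg.2 (hmin hy))) (hπ x hx).le)
    h0

noncomputable def metropolisKernel {X : Type*} (π : X → ℝ) (q : X → X → ℝ) (h : ℝ → ℝ)
    (x y : X) : ℝ :=
  π x * q x y * h (q y x * π y / (q x y * π x))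

section MetropolisKernel

variable {X : Type*} {π : X → ℝ} {q : X → X → ℝ} {h : ℝ → ℝ}

theorem metropolisKernel_nonneg (hh : ∀ u ∈ Ici (0 : ℝ), 0 ≤ h u) {x y : X} (hπx : 0 < π x)
    (hπy : 0 < π y) (hqxy : 0 < q x y) (hqyx : 0 < q y x) : 0 ≤ metropolisKernel π q h x y :=
  mul_nonneg (by positivity) (hh _ (mem_Ici.2 (by positivity)))

theorem metropolisKernel_comm (hsym : ∀ u : ℝ, 0 < u → u * h (1 / u) = h u) {x y : X}
    (hπx : 0 < π x) (hπy : 0 < π y) (hqxy : 0 < q x y) (hqyx : 0 < q y x) :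
    metropolisKernel π q h x y = metropolisKernel π q h y x := by
  have hα : 0 < q y x * π y / (q x y * π x) := by positivity
  rw [metropolisKernel, metropolisKernel, ← hsym _ hα, one_div_div]
  field_simp

theorem le_metropolisKernel_of_one_le (hmono : MonotoneOn h (Ici 0)) (hh₁ : 0 ≤ h 1) {c : ℝ}
    {x y : X} (hπx : 0 ≤ π x) (hqxy : 0 ≤ q x y) (hlb : c * π y ≤ q x y)
    (hα : 1 ≤ q y x * π y / (q x y * π x)) :
    c * h 1 * (π x * π y) ≤ metropolisKernel π q h x y :=
  calc c * h 1 * (π x * π y) = π x * (c * π y) * h 1 := by ring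
    _ ≤ π x * q x y * h (q y x * π y / (q x y * π x)) :=
      mul_le_mul (mul_le_mul_of_nonneg_left hlb hπx)
        (hmono (mem_Ici.2 zero_le_one) (mem_Ici.2 (zero_le_one.trans hα)) hα) hh₁
        (mul_nonneg hπx hqxy)

theorem le_metropolisKernel (hsym : ∀ u : ℝ, 0 < u → u * h (1 / u) = h u)
    (hmono : MonotoneOn h (Ici 0)) (hh₁ : 0 ≤ h 1) {E : Set X} (hπ : ∀ x ∈ E, 0 < π x)
    (hq : ∀ x ∈ E, ∀ y ∈ E, 0 < q x y) {c : ℝ} (hlb : ∀ x ∈ E, ∀ y ∈ E, c * π y ≤ q x y) :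
    ∀ x ∈ E, ∀ y ∈ E, c * h 1 * (π x * π y) ≤ metropolisKernel π q h x y := by
  intro x hx y hy
  rcases le_or_gt 1 (q y x * π y / (q x y * π x)) with hα | hα
  · exact le_metropolisKernel_of_one_le hmono hh₁ (hπ x hx).le (hq x hx y hy).le
      (hlb x hx y hy) hα
  · rw [metropolisKernel_comm hsym (hπ x hx) (hπ y hy) (hq x hx y hy) (hq y hy x hx),
      mul_comm (π x)]
    refine le_metropolisKernel_of_one_le hmono hh₁ (hπ y hy).le (hq y hy x hx).le
      (hlb y hy x hx) ?_
    rw [div_lt_one (mul_pos (hq x hx y hy) (hπ x hx))] at hα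
    rw [one_le_div (mul_pos (hq y hy x hx) (hπ y hy))]
    exact hα.le

theorem continuousOn_metropolisKernel [TopologicalSpace X] {E : Set X} (hπc : ContinuousOn π E)
    (hπ : ∀ x ∈ E, 0 < π x) (hqc : ContinuousOn (fun z : X × X => q z.1 z.2) (E ×ˢ E))
    (hq : ∀ x ∈ E, ∀ y ∈ E, 0 < q x y) (hh : ContinuousOn h (Ici 0)) :
    ContinuousOn (fun z : X × X => metropolisKernel π q h z.1 z.2) (E ×ˢ E) := by
  have hπ₁ := hπc.comp_fst_prod E
  have hπ₂ := hπc.comp_snd_prod E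
  have hα : ContinuousOn (fun z : X × X => q z.2 z.1 * π z.2 / (q z.1 z.2 * π z.1)) (E ×ˢ E) :=
    ((hqc.comp continuous_swap.continuousOn fun _ hz => ⟨hz.2, hz.1⟩).mul hπ₂).div
      (hqc.mul hπ₁) fun z hz => (mul_pos (hq _ hz.1 _ hz.2) (hπ _ hz.1)).ne'
  exact (hπ₁.mul hqc).mul (hh.comp hα fun z hz => div_nonneg
    (mul_pos (hq _ hz.2 _ hz.1) (hπ _ hz.2)).le (mul_pos (hq _ hz.1 _ hz.2) (hπ _ hz.1)).le)

end MetropolisKernel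

section SpectralGap

variable {X : Type*} [TopologicalSpace X] [T2Space X] [SecondCountableTopology X]
  [MeasurableSpace X] [OpensMeasurableSpace X] {μ : Measure X} [IsFiniteMeasureOnCompacts μ]
  [SFinite μ] {E : Set X}

theorem integral_mul_integral_sub_eq_neg_setIntegral_prod (hE : IsCompact E) {K : X → X → ℝ}
    {g : X → ℝ} (hK : ContinuousOn (fun z : X × X => K z.1 z.2) (E ×ˢ E))
    (hKsymm : ∀ x ∈ E, ∀ y ∈ E, K x y = K y x) (hg : ContinuousOn g E) :
    ∫ x in E, 2 * g x * ∫ y in E, K x y * (g y - g x) ∂μ ∂μ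
      = -∫ z in E ×ˢ E, K z.1 z.2 * (g z.2 - g z.1) ^ 2 ∂μ.prod μ := by
  set F : X × X → ℝ := fun z => 2 * g z.1 * (K z.1 z.2 * (g z.2 - g z.1))
  have hFc : ContinuousOn F (E ×ˢ E) := (continuousOn_const.mul (hg.comp_fst_prod E)).mul
    (hK.mul ((hg.comp_snd_prod E).sub (hg.comp_fst_prod E)))
  have hF : IntegrableOn F (E ×ˢ E) (μ.prod μ) := hFc.integrableOn_compact (hE.prod hE)
  have hF' : IntegrableOn (fun z => F z.swap) (E ×ˢ E) (μ.prod μ) :=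
    (hFc.comp continuous_swap.continuousOn fun z hz => ⟨hz.2, hz.1⟩).integrableOn_compact
      (hE.prod hE)
  have hiter : ∫ x in E, 2 * g x * ∫ y in E, K x y * (g y - g x) ∂μ ∂μ
      = ∫ z in E ×ˢ E, F z ∂μ.prod μ := by
    simp_rw [← integral_const_mul]
    exact (setIntegral_prod F hF).symm
  -- Averaging `F` with its reflection `F ∘ swap` turns the integrand into `-K (g y - g x)²`.
  have hsymm : ∫ z in E ×ˢ E, (F z + F z.swap) ∂μ.prod μ
      = -2 * ∫ z in E ×ˢ E, K z.1 z.2 * (g z.2 - g z.1) ^ 2 ∂μ.prod μ := by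
    rw [← integral_const_mul]
    refine setIntegral_congr_fun (hE.prod hE).measurableSet fun z hz => ?_
    simp only [F, Prod.fst_swap, Prod.snd_swap, hKsymm z.2 hz.2 z.1 hz.1]
    ring
  rw [integral_add hF hF', setIntegral_prod_swap E E F] at hsymm
  linarith

theorem setIntegral_prod_mul_sub_sq (hE : IsCompact E) {w g : X → ℝ} (hw : ContinuousOn w E)
    (hg : ContinuousOn g E) :
    ∫ z in E ×ˢ E, w z.1 * w z.2 * (g z.2 - g z.1) ^ 2 ∂μ.prod μ
      = 2 * ((∫ x in E, w x ∂μ) * (∫ x in E, w x * g x ^ 2 ∂μ)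
        - (∫ x in E, w x * g x ∂μ) ^ 2) := by
  have hw₁ := hw.comp_fst_prod E
  have hw₂ := hw.comp_snd_prod E
  have hg₁ := hg.comp_fst_prod E
  have hg₂ := hg.comp_snd_prod E
  have hA : IntegrableOn (fun z : X × X => w z.1 * (w z.2 * g z.2 ^ 2)) (E ×ˢ E) (μ.prod μ) :=
    (hw₁.mul (hw₂.mul (hg₂.pow 2))).integrableOn_compact (hE.prod hE)
  have hB : IntegrableOn (fun z : X × X => w z.1 * g z.1 ^ 2 * w z.2) (E ×ˢ E) (μ.prod μ) :=
    ((hw₁.mul (hg₁.pow 2)).mul hw₂).integrableOn_compact (hE.prod hE)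
  have hC : IntegrableOn (fun z : X × X => 2 * (w z.1 * g z.1 * (w z.2 * g z.2))) (E ×ˢ E)
      (μ.prod μ) :=
    (continuousOn_const.mul ((hw₁.mul hg₁).mul (hw₂.mul hg₂))).integrableOn_compact (hE.prod hE)
  have hexpand : (fun z : X × X => w z.1 * w z.2 * (g z.2 - g z.1) ^ 2)
      = fun z => w z.1 * (w z.2 * g z.2 ^ 2) + w z.1 * g z.1 ^ 2 * w z.2
        - 2 * (w z.1 * g z.1 * (w z.2 * g z.2)) := by
    ext z; ring
  rw [hexpand, integral_sub (by exact hA.add hB) hC, integral_add hA hB, integral_const_mul,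
    setIntegral_prod_mul w (fun y => w y * g y ^ 2),
    setIntegral_prod_mul (fun x => w x * g x ^ 2) w,
    setIntegral_prod_mul (fun x => w x * g x) (fun y => w y * g y)]
  ring

theorem integral_mul_integral_sub_le (hE : IsCompact E) {K : X → X → ℝ} {w g : X → ℝ} {c : ℝ}
    (hK : ContinuousOn (fun z : X × X => K z.1 z.2) (E ×ˢ E))
    (hKsymm : ∀ x ∈ E, ∀ y ∈ E, K x y = K y x)
    (hKlb : ∀ x ∈ E, ∀ y ∈ E, c * (w x * w y) ≤ K x y)
    (hw : ContinuousOn w E) (hg : ContinuousOn g E)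
    (hw₁ : ∫ x in E, w x ∂μ = 1) (hwg : ∫ x in E, w x * g x ∂μ = 0) :
    ∫ x in E, 2 * g x * ∫ y in E, K x y * (g y - g x) ∂μ ∂μ
      ≤ -(2 * c) * ∫ x in E, w x * g x ^ 2 ∂μ := by
  have hsq := ((hg.comp_snd_prod E).sub (hg.comp_fst_prod E)).pow 2
  have hmono : ∫ z in E ×ˢ E, c * (w z.1 * w z.2 * (g z.2 - g z.1) ^ 2) ∂μ.prod μ
      ≤ ∫ z in E ×ˢ E, K z.1 z.2 * (g z.2 - g z.1) ^ 2 ∂μ.prod μ := by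
    refine setIntegral_mono_on ?_ ?_ (hE.prod hE).measurableSet fun z hz => ?_
    · exact (continuousOn_const.mul (((hw.comp_fst_prod E).mul (hw.comp_snd_prod E)).mul
        hsq)).integrableOn_compact (hE.prod hE)
    · exact (hK.mul hsq).integrableOn_compact (hE.prod hE)
    · rw [← mul_assoc]
      exact mul_le_mul_of_nonneg_right (hKlb z.1 hz.1 z.2 hz.2) (sq_nonneg _)
  rw [integral_mul_integral_sub_eq_neg_setIntegral_prod hE hK hKsymm hg]
  rw [integral_const_mul, setIntegral_prod_mul_sub_sq hE hw hg, hw₁, hwg] at hmono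
  linarith

theorem integral_mul_integral_metropolisKernel_le (hE : IsCompact E) {π f : X → ℝ}
    {q : X → X → ℝ} {h : ℝ → ℝ} {c : ℝ} (hπc : ContinuousOn π E) (hπ : ∀ x ∈ E, 0 < π x)
    (hπ₁ : ∫ x in E, π x ∂μ = 1) (hfc : ContinuousOn f E) (hf₁ : ∫ x in E, f x ∂μ = 1)
    (hqc : ContinuousOn (fun z : X × X => q z.1 z.2) (E ×ˢ E))
    (hq : ∀ x ∈ E, ∀ y ∈ E, 0 < q x y) (hlb : ∀ x ∈ E, ∀ y ∈ E, c * π y ≤ q x y)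
    (hcont : ContinuousOn h (Ici 0)) (hmono : MonotoneOn h (Ici 0))
    (hh : ∀ u ∈ Ici (0 : ℝ), 0 ≤ h u) (hsym : ∀ u : ℝ, 0 < u → u * h (1 / u) = h u) :
    ∫ x in E, 2 * (f x / π x - 1) *
        ∫ y in E, metropolisKernel π q h x y * (f y / π y - f x / π x) ∂μ ∂μ
      ≤ -(2 * (c * h 1)) * ∫ x in E, π x * (f x / π x - 1) ^ 2 ∂μ := by
  have hcentered : ∫ x in E, π x * (f x / π x - 1) ∂μ = 0 := by
    rw [setIntegral_congr_fun hE.measurableSet (g := fun x => f x - π x)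
      fun x hx => by field_simp [(hπ x hx).ne'],
      integral_sub (hfc.integrableOn_compact hE) (hπc.integrableOn_compact hE), hf₁, hπ₁,
      sub_self]
  have := integral_mul_integral_sub_le hE (g := fun x => f x / π x - 1)
    (continuousOn_metropolisKernel hπc hπ hqc hq hcont)
    (fun x hx y hy => metropolisKernel_comm hsym (hπ x hx) (hπ y hy) (hq x hx y hy) (hq y hy x hx))
    (le_metropolisKernel hsym hmono (hh 1 (mem_Ici.2 zero_le_one)) hπ hq hlb)
    hπc ((hfc.div hπc fun x hx => (hπ x hx).ne').sub continuousOn_const) hπ₁ hcentered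
  simpa only [sub_sub_sub_cancel_right] using this

end SpectralGap

theorem convexOn_sub_one_sq : ConvexOn ℝ univ fun v : ℝ => (v - 1) ^ 2 := by
  simpa [Function.comp_def, ← sub_eq_neg_add] using
    (even_two.convexOn_pow (𝕜 := ℝ)).translate_right (-1)

theorem deriv_sub_one_sq : deriv (fun v : ℝ => (v - 1) ^ 2) = fun v => 2 * (v - 1) := by
  ext v
  simp

theorem stmt_9_general {d : ℕ} (E : Set (EuclideanSpace ℝ (Fin d))) (hE : IsCompact E)
    (π : EuclideanSpace ℝ (Fin d) → ℝ) (hπ : IsPosDensityOn E π)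
    (h : ℝ → ℝ)
    (hcont : ContinuousOn h (Set.Ici 0))
    (hmono : MonotoneOn h (Set.Ici 0))
    (hrange : ∀ u ∈ Set.Ici (0 : ℝ), h u ∈ Set.Icc (0 : ℝ) 1)
    (hsym : ∀ u : ℝ, 0 < u → u * h (1 / u) = h u)
    (Θ : (EuclideanSpace ℝ (Fin d) → ℝ) →
      EuclideanSpace ℝ (Fin d) → EuclideanSpace ℝ (Fin d) → ℝ)
    (hΘ : ∀ g, IsPosDensityOn E g →
      ContinuousOn (fun p : EuclideanSpace ℝ (Fin d) × EuclideanSpace ℝ (Fin d) =>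
        Θ g p.1 p.2) (E ×ˢ E) ∧
      (∀ x ∈ E, ∀ y ∈ E, 0 < Θ g x y) ∧
      (∀ x ∈ E, (∫ y in E, Θ g x y) = 1))
    (cminus : ℝ → ℝ)
    (hcm_mono : MonotoneOn cminus (Set.Ioi 0))
    (hmonot : ∀ g, IsPosDensityOn E g → ∀ x ∈ E, ∀ y ∈ E,
      cminus (sInf ((fun z => g z / π z) '' E)) ≤ Θ g x y / π y)
    (f : ℝ → EuclideanSpace ℝ (Fin d) → ℝ)
    (hfc : ContinuousOn (fun p : ℝ × EuclideanSpace ℝ (Fin d) => f p.1 p.2)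
      (Set.Ici 0 ×ˢ E))
    (hft : ∀ t ∈ Set.Ici (0 : ℝ), IsPosDensityOn E (f t))
    (hm : 0 < sInf ((fun x => f 0 x / π x) '' E))
    (hderiv : ∀ t ∈ Set.Ici (0 : ℝ), ∀ x ∈ E,
      HasDerivWithinAt (fun s => f s x)
        (∫ y in E, π x * Θ (f t) x y *
          h (Θ (f t) y x * π y / (Θ (f t) x y * π x)) *
          (f t y / π y - f t x / π x)) (Set.Ici 0) t)
    (hentropy : ∀ φ : ℝ → ℝ, ConvexOn ℝ Set.univ φ → ContDiff ℝ 1 φ →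
      ∀ t ∈ Set.Ici (0 : ℝ),
      HasDerivWithinAt (fun s => ∫ x in E, π x * φ (f s x / π x))
        (∫ x in E, deriv φ (f t x / π x) *
          (∫ y in E, π x * Θ (f t) x y *
            h (Θ (f t) y x * π y / (Θ (f t) x y * π x)) *
            (f t y / π y - f t x / π x))) (Set.Ici 0) t) :
    ∀ t ∈ Set.Ici (0 : ℝ),
      (1 / 2) * ∫ x in E, π x * |f t x / π x - 1| ^ 2
        ≤ ((1 / 2) * ∫ x in E, π x * |f 0 x / π x - 1| ^ 2) *
            Real.exp (-2 * cminus (sInf ((fun x => f 0 x / π x) '' E)) * h 1 * t) := by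
  obtain ⟨hπc, hπ, hπ₁⟩ := hπ
  set m := sInf ((fun x => f 0 x / π x) '' E)
  have hh : ∀ u ∈ Ici (0 : ℝ), 0 ≤ h u := fun u hu => (hrange u hu).1
  have hΘpos : ∀ t ∈ Ici (0 : ℝ), ∀ x ∈ E, ∀ y ∈ E, 0 < Θ (f t) x y :=
    fun t ht => (hΘ (f t) (hft t ht)).2.1
  have hmin : ∀ t ∈ Ici (0 : ℝ), ∀ x ∈ E, m ≤ f t x / π x :=
    le_div_of_jump_equation volume hE (K := fun t => metropolisKernel π (Θ (f t)) h) hπc hπ hfc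
      (fun t ht x hx y hy => metropolisKernel_nonneg hh (hπ x hx) (hπ y hy)
        (hΘpos t (Ioi_subset_Ici_self ht) x hx y hy) (hΘpos t (Ioi_subset_Ici_self ht) y hy x hx))
      (fun t ht x hx => hderiv t (Ioi_subset_Ici_self ht) x hx)
      fun x hx => csInf_le (hE.image_of_continuousOn
        ((hft 0 self_mem_Ici).1.div hπc fun y hy => (hπ y hy).ne')).bddBelow ⟨x, hx, rfl⟩
  have hΘlb : ∀ t ∈ Ici (0 : ℝ), ∀ x ∈ E, ∀ y ∈ E, cminus m * π y ≤ Θ (f t) x y := by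
    intro t ht x hx y hy
    have hinf : m ≤ sInf ((fun z => f t z / π z) '' E) :=
      le_csInf (Set.Nonempty.image _ ⟨x, hx⟩) (forall_mem_image.2 (hmin t ht))
    exact (le_div_iff₀ (hπ y hy)).1
      ((hcm_mono hm (hm.trans_le hinf) hinf).trans (hmonot _ (hft t ht) x hx y hy))
  have hgronwall := le_mul_exp_of_hasDerivWithinAt_le_neg_mul (k := 2 * (cminus m * h 1))
    (fun t ht => hentropy _ convexOn_sub_one_sq (by fun_prop) t ht) fun t ht => by
      simp only [deriv_sub_one_sq]
      exact integral_mul_integral_metropolisKernel_le hE hπc hπ hπ₁ (hft t ht).1 (hft t ht).2.2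
        (hΘ (f t) (hft t ht)).1 (hΘpos t ht) (hΘlb t ht) hcont hmono hh hsym
  intro t ht
  simp only [sq_abs]
  rw [show -2 * cminus m * h 1 * t = -(2 * (cminus m * h 1)) * t by ring, mul_assoc]
  linarith [hgronwall t ht]

/-- Under the monotonicity assumption on the proposal distribution
(there is a non-decreasing `c⁻ : (0,∞) → (0,1]` with
`Θ_g(y|x)/π(y) ≥ c⁻(inf_E g/π)` for every continuous positive probability density
`g` and all `x, y ∈ E`), if `f` solves the nonlinear Metropolis evolution equation
with `m := inf_E f₀/π > 0` and `H(t) := (1/2)∫_E π|f_t/π − 1|²`, then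
`H(t) ≤ H(0)·exp(−2 c⁻(m) h(1) t)` for all `t ≥ 0`.
Here `Θ g x y` denotes `Θ_g(y|x)`. -/
theorem stmt_9 {d : ℕ} (E : Set (EuclideanSpace ℝ (Fin d))) (hE : IsCompact E)
    (π : EuclideanSpace ℝ (Fin d) → ℝ) (hπ : IsPosDensityOn E π)
    (h : ℝ → ℝ)
    (hcont : ContinuousOn h (Set.Ici 0))
    (hmono : MonotoneOn h (Set.Ici 0))
    (hrange : ∀ u ∈ Set.Ici (0 : ℝ), h u ∈ Set.Icc (0 : ℝ) 1)
    (hlip : ∃ L : NNReal, LipschitzOnWith L h (Set.Ici 0))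
    (hsym : ∀ u : ℝ, 0 < u → u * h (1 / u) = h u)
    (Θ : (EuclideanSpace ℝ (Fin d) → ℝ) →
      EuclideanSpace ℝ (Fin d) → EuclideanSpace ℝ (Fin d) → ℝ)
    (hΘ : ∀ g, IsPosDensityOn E g →
      ContinuousOn (fun p : EuclideanSpace ℝ (Fin d) × EuclideanSpace ℝ (Fin d) =>
        Θ g p.1 p.2) (E ×ˢ E) ∧
      (∀ x ∈ E, ∀ y ∈ E, 0 < Θ g x y) ∧
      (∀ x ∈ E, (∫ y in E, Θ g x y) = 1))
    (cminus : ℝ → ℝ)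
    (hcm_mono : MonotoneOn cminus (Set.Ioi 0))
    (hcm_range : ∀ m : ℝ, 0 < m → cminus m ∈ Set.Ioc (0 : ℝ) 1)
    (hmonot : ∀ g, IsPosDensityOn E g → ∀ x ∈ E, ∀ y ∈ E,
      cminus (sInf ((fun z => g z / π z) '' E)) ≤ Θ g x y / π y)
    (f : ℝ → EuclideanSpace ℝ (Fin d) → ℝ)
    (hfc : ContinuousOn (fun p : ℝ × EuclideanSpace ℝ (Fin d) => f p.1 p.2)
      (Set.Ici 0 ×ˢ E))
    (hft : ∀ t ∈ Set.Ici (0 : ℝ), IsPosDensityOn E (f t))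
    (hm : 0 < sInf ((fun x => f 0 x / π x) '' E))
    (hderiv : ∀ t ∈ Set.Ici (0 : ℝ), ∀ x ∈ E,
      HasDerivWithinAt (fun s => f s x)
        (∫ y in E, π x * Θ (f t) x y *
          h (Θ (f t) y x * π y / (Θ (f t) x y * π x)) *
          (f t y / π y - f t x / π x)) (Set.Ici 0) t)
    (hentropy : ∀ φ : ℝ → ℝ, ConvexOn ℝ Set.univ φ → ContDiff ℝ 1 φ →
      ∀ t ∈ Set.Ici (0 : ℝ),
      HasDerivWithinAt (fun s => ∫ x in E, π x * φ (f s x / π x))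
        (∫ x in E, deriv φ (f t x / π x) *
          (∫ y in E, π x * Θ (f t) x y *
            h (Θ (f t) y x * π y / (Θ (f t) x y * π x)) *
            (f t y / π y - f t x / π x))) (Set.Ici 0) t) :
    ∀ t ∈ Set.Ici (0 : ℝ),
      (1 / 2) * ∫ x in E, π x * |f t x / π x - 1| ^ 2
        ≤ ((1 / 2) * ∫ x in E, π x * |f 0 x / π x - 1| ^ 2) *
            Real.exp (-2 * cminus (sInf ((fun x => f 0 x / π x) '' E)) * h 1 * t) :=
  stmt_9_general E hE π hπ h hcont hmono hrange hsym Θ hΘ cminus hcm_mono hmonot f hfc hft hm hderiv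
    hentropy
end
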